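/- arXiv:1611.09150 — 2 statements merged into one kernel-verified Lean document; each statement's English description precedes it below -/
import Mathlib

section
/- Let X,Y∈𝒮 be distinct orbits with X of type II_m and Y of type I, such that m_{s,t}≥3 for at least one pair (s,t)∈X×Y. Then ⟨ε̃_X, ε̃_Y⟩ = p_X·√(v_Y)/√(v_X·(1−cos(π/m))). -/
noncomputable section

open Real

namespace CoxeterFixedPoints

/-- `(V, B, ε)` is a root basis of the Coxeter graph whose Coxeter matrix is `M`
(the entry `0` of a Coxeter matrix stands for `∞`). -/
def IsRootBasis {S V : Type*} [AddCommGroup V] [Module ℝ V]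
    (M : CoxeterMatrix S) (B : V →ₗ[ℝ] V →ₗ[ℝ] ℝ) (ε : S → V) : Prop :=
  (∀ x y : V, B x y = B y x) ∧
  (∀ s : S, B (ε s) (ε s) = 1) ∧
  (∀ s t : S, s ≠ t → M s t ≠ 0 →
    B (ε s) (ε t) = - Real.cos (Real.pi / (M s t : ℝ))) ∧
  (∀ s t : S, s ≠ t → M s t = 0 → B (ε s) (ε t) ≤ -1) ∧
  (∃ χ : V →ₗ[ℝ] ℝ, ∀ s : S, 0 < χ (ε s))

/-- The standard parabolic subgroup `W_X` of `W` generated by `X ⊆ S`. -/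
def parabolic {S W : Type*} [Group W] {M : CoxeterMatrix S} (cs : CoxeterSystem M W)
    (X : Set S) : Subgroup W :=
  Subgroup.closure (cs.simple '' X)

/-- `w` is the longest element of the standard parabolic subgroup `W_X`. -/
def IsLongestElement {S W : Type*} [Group W] {M : CoxeterMatrix S} (cs : CoxeterSystem M W)
    (X : Set S) (w : W) : Prop :=
  w ∈ parabolic cs X ∧ ∀ u ∈ parabolic cs X, cs.length u ≤ cs.length w

/-- `X ∈ 𝒮`, i.e. `X` is an orbit of `G` in `S` such that `W_X` is finite. -/
def IsFinOrbit {S W : Type*} [Group W] {M : CoxeterMatrix S} (cs : CoxeterSystem M W)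
    (G : Type*) [Group G] [MulAction G S] (X : Set S) : Prop :=
  (∃ s : S, X = MulAction.orbit G s) ∧ ((parabolic cs X : Set W)).Finite

/-- `a_X = Σ_{s ∈ X} ε_s`. -/
def aVec {S V : Type*} [AddCommGroup V] [Module ℝ V] (ε : S → V) (X : Set S) : V :=
  ∑ᶠ s ∈ X, ε s

/-- `ε̃_X = a_X / ⟨a_X, a_X⟩^{1/2}`. -/
def epsTilde {S V : Type*} [AddCommGroup V] [Module ℝ V]
    (B : V →ₗ[ℝ] V →ₗ[ℝ] ℝ) (ε : S → V) (X : Set S) : V :=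
  (Real.sqrt (B (aVec ε X) (aVec ε X)))⁻¹ • aVec ε X

/-- There is no edge of the Coxeter graph of `M` between a vertex of `X` and a
(distinct) vertex of `Y`. -/
def NoEdges {S : Type*} (M : CoxeterMatrix S) (X Y : Set S) : Prop :=
  ∀ s ∈ X, ∀ t ∈ Y, s ≠ t → M s t = 2

/-- `X` is of type I : `Γ_X` has no edge. -/
def TypeI {S : Type*} (M : CoxeterMatrix S) (X : Set S) : Prop :=
  ∀ s ∈ X, ∀ t ∈ X, s ≠ t → M s t = 2

/-- `X` is of type II_m : `X` is partitioned into pairs `{s, ι s}` with `m_{s, ι s} = m ≥ 3`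
(`m` finite), and `m_{s,t} = 2` for `s, t ∈ X` not belonging to a common pair. -/
def TypeII {S : Type*} (M : CoxeterMatrix S) (X : Set S) (m : ℕ) : Prop :=
  3 ≤ m ∧ ∃ ι : S → S,
    (∀ s ∈ X, ι s ∈ X ∧ ι s ≠ s ∧ ι (ι s) = s ∧ M s (ι s) = m) ∧
    (∀ s ∈ X, ∀ t ∈ X, t ≠ s → t ≠ ι s → M s t = 2)

/-- `Γ_{X ∪ Y}` is a disjoint union of single edges with label `m ≥ 3` (possibly `m = ∞`,
encoded by `0`), each edge joining a vertex of `X` to a vertex of `Y` :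
bi-orbit of type (1). -/
def BiOrbit1 {S : Type*} (M : CoxeterMatrix S) (X Y : Set S) (m : ℕ) : Prop :=
  (m = 0 ∨ 3 ≤ m) ∧
  ∃ σ : S → S, Set.BijOn σ X Y ∧
    (∀ x ∈ X, M x (σ x) = m) ∧
    (∀ x ∈ X, ∀ y ∈ Y, y ≠ σ x → M x y = 2) ∧
    NoEdges M X X ∧ NoEdges M Y Y

/-- `Γ_{E ∪ C}` is a disjoint union of paths `a − b − c` with both labels `3`, whose end
vertices lie in `E` and whose middle vertex lies in `C` : bi-orbit of type (2)
(in one of the two orientations). -/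
def BiOrbit2 {S : Type*} (M : CoxeterMatrix S) (E C : Set S) : Prop :=
  ∃ τ : S → S, Set.MapsTo τ E C ∧
    (∀ c ∈ C, {e | e ∈ E ∧ τ e = c}.ncard = 2) ∧
    (∀ e ∈ E, M e (τ e) = 3) ∧
    (∀ e ∈ E, ∀ c ∈ C, c ≠ τ e → M e c = 2) ∧
    NoEdges M E E ∧ NoEdges M C C

/-- `Γ_{D ∪ C}` is a disjoint union of paths `a − b − c − d` with `a, d ∈ D`, `b, c ∈ C`,
outer labels `3` and middle label `mid` : used for bi-orbits of types (3) and (4). -/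
def BiOrbitPath {S : Type*} (M : CoxeterMatrix S) (D C : Set S) (mid : ℕ) : Prop :=
  ∃ σ ι : S → S, Set.BijOn σ D C ∧
    (∀ c ∈ C, ι c ∈ C ∧ ι c ≠ c ∧ ι (ι c) = c ∧ M c (ι c) = mid) ∧
    (∀ d ∈ D, M d (σ d) = 3) ∧
    (∀ d ∈ D, ∀ c ∈ C, c ≠ σ d → M d c = 2) ∧
    (∀ c ∈ C, ∀ c' ∈ C, c' ≠ c → c' ≠ ι c → M c c' = 2) ∧
    NoEdges M D D

/-- Bi-orbit of type (3) : paths `a − b − c − d` with all labels `3`. -/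
def BiOrbit3 {S : Type*} (M : CoxeterMatrix S) (D C : Set S) : Prop :=
  BiOrbitPath M D C 3

/-- Bi-orbit of type (4) : paths `a − b − c − d` with labels `3, 4, 3`. -/
def BiOrbit4 {S : Type*} (M : CoxeterMatrix S) (D C : Set S) : Prop :=
  BiOrbitPath M D C 4

/-- `Γ_{L ∪ C}` is a disjoint union of stars with center in `C`, three leaves in `L`
and all labels `3` : bi-orbit of type (5) (in one of the two orientations). -/
def BiOrbit5 {S : Type*} (M : CoxeterMatrix S) (L C : Set S) : Prop :=
  ∃ τ : S → S, Set.MapsTo τ L C ∧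
    (∀ c ∈ C, {l | l ∈ L ∧ τ l = c}.ncard = 3) ∧
    (∀ l ∈ L, M l (τ l) = 3) ∧
    (∀ l ∈ L, ∀ c ∈ C, c ≠ τ l → M l c = 2) ∧
    NoEdges M L L ∧ NoEdges M C C

/-- `m` is the entry `m̃_{X,Y}` of the Coxeter matrix `M̃` of `Γ̃` (`0` stands for `∞`). -/
def TildeMIs {S : Type*} (M : CoxeterMatrix S) (X Y : Set S) (m : ℕ) : Prop :=
  (X = Y ∧ m = 1) ∨
  (X ≠ Y ∧
    ((NoEdges M X Y ∧ m = 2) ∨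
     (¬ NoEdges M X Y ∧
       ((BiOrbit1 M X Y m ∨ BiOrbit1 M Y X m) ∨
        ((BiOrbit2 M X Y ∨ BiOrbit2 M Y X) ∧ m = 4) ∨
        ((BiOrbit3 M X Y ∨ BiOrbit3 M Y X) ∧ m = 4) ∨
        ((BiOrbit4 M X Y ∨ BiOrbit4 M Y X) ∧ m = 8) ∨
        ((BiOrbit5 M X Y ∨ BiOrbit5 M Y X) ∧ m = 6) ∨
        ((∀ k : ℕ, ¬ BiOrbit1 M X Y k ∧ ¬ BiOrbit1 M Y X k) ∧
         (¬ BiOrbit2 M X Y ∧ ¬ BiOrbit2 M Y X) ∧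
         (¬ BiOrbit3 M X Y ∧ ¬ BiOrbit3 M Y X) ∧
         (¬ BiOrbit4 M X Y ∧ ¬ BiOrbit4 M Y X) ∧
         (¬ BiOrbit5 M X Y ∧ ¬ BiOrbit5 M Y X) ∧ m = 0)))))

/-- `v_X = |{t ∈ Y | m_{s,t} ≥ 3}|` (including `m_{s,t} = ∞`, encoded by `0`),
for a chosen `s` in the other orbit. -/
def vcount {S : Type*} (M : CoxeterMatrix S) (Y : Set S) (s : S) : ℕ :=
  {t | t ∈ Y ∧ (M s t = 0 ∨ 3 ≤ M s t)}.ncard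

/-- `p_X = Σ_{t ∈ Y} ⟨ε_s, ε_t⟩`, for a chosen `s` in the other orbit. -/
def psum {S V : Type*} [AddCommGroup V] [Module ℝ V]
    (B : V →ₗ[ℝ] V →ₗ[ℝ] ℝ) (ε : S → V) (Y : Set S) (s : S) : ℝ :=
  ∑ᶠ t ∈ Y, B (ε s) (ε t)

/-- The subgroup `W^G` of elements of `W` fixed by the action of `G` on `W`
given by `φ : G →* MulAut W`. -/
def fixedSubgroup {W G : Type*} [Group W] [Group G] (φ : G →* MulAut W) : Subgroup W where
  carrier := {w | ∀ g : G, φ g w = w}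
  one_mem' := fun g => map_one (φ g)
  mul_mem' := by
    intro a b ha hb g
    rw [map_mul, ha g, hb g]
  inv_mem' := by
    intro a ha g
    rw [map_inv, ha g]

/-- The subspace `V^G` of vectors of `V` fixed by the action of `G` on `V`
given by `ρ : G →* GL(V)`. -/
def fixedSubmodule {V G : Type*} [AddCommGroup V] [Module ℝ V] [Group G]
    (ρ : G →* (V ≃ₗ[ℝ] V)) : Submodule ℝ V where
  carrier := {x | ∀ g : G, ρ g x = x}
  zero_mem' := fun g => map_zero (ρ g)
  add_mem' := by
    intro a b ha hb g
    rw [map_add, ha g, hb g]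
  smul_mem' := by
    intro c x hx g
    rw [map_smul, hx g]



private lemma orbit_inv_aux {G S : Type*} [Group G] [MulAction G S] {z : S}
    (g : G) (u : S) : g • u ∈ MulAction.orbit G z ↔ u ∈ MulAction.orbit G z := by
  constructor
  · intro h
    obtain ⟨k, hk⟩ := MulAction.mem_orbit_iff.mp h
    exact MulAction.mem_orbit_iff.mpr ⟨g⁻¹ * k, by rw [mul_smul, hk, inv_smul_smul]⟩
  · intro h
    obtain ⟨k, hk⟩ := MulAction.mem_orbit_iff.mp h
    exact MulAction.mem_orbit_iff.mpr ⟨g * k, by rw [mul_smul, hk]⟩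

private lemma orbit_trans_aux {G S : Type*} [Group G] [MulAction G S] {z u v : S}
    (hu : u ∈ MulAction.orbit G z) (hv : v ∈ MulAction.orbit G z) :
    ∃ g : G, g • u = v := by
  rw [← MulAction.orbit_eq_iff.mpr hu] at hv; exact hv

private lemma bilin_sum_sum {S V : Type*} [AddCommGroup V] [Module ℝ V]
    (B : V →ₗ[ℝ] V →ₗ[ℝ] ℝ) (ε η : S → V) (FX FY : Finset S) :
    B (∑ u ∈ FX, ε u) (∑ w ∈ FY, η w) = ∑ u ∈ FX, ∑ w ∈ FY, B (ε u) (η w) := by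
  rw [map_sum B ε FX, LinearMap.sum_apply]
  exact Finset.sum_congr rfl fun u _ => map_sum (B (ε u)) η FY

private lemma final_arith (nX nY vX vY p c : ℝ) (hnX : 0 < nX) (hnY : 0 < nY)
    (hvX : 0 < vX) (hvY : 0 < vY) (hc : 0 < 1 - c) (hcount : nX * vX = nY * vY) :
    (Real.sqrt (nX * (1 - c)))⁻¹ * ((Real.sqrt nY)⁻¹ * (nX * p))
      = p * Real.sqrt vY / Real.sqrt (vX * (1 - c)) := by
  have key : (Real.sqrt (nX * (1 - c)))⁻¹ * (Real.sqrt nY)⁻¹ * nX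
      = Real.sqrt vY / Real.sqrt (vX * (1 - c)) := by
    have hA : 0 ≤ (Real.sqrt (nX * (1 - c)))⁻¹ * (Real.sqrt nY)⁻¹ * nX := by positivity
    have hB0 : 0 ≤ Real.sqrt vY / Real.sqrt (vX * (1 - c)) := by positivity
    have h1 : ((Real.sqrt (nX * (1 - c)))⁻¹ * (Real.sqrt nY)⁻¹ * nX) ^ 2
        = (nX * (1 - c))⁻¹ * nY⁻¹ * nX ^ 2 := by
      rw [mul_pow, mul_pow, inv_pow, inv_pow,
        Real.sq_sqrt (by positivity : (0:ℝ) ≤ nX * (1 - c)),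
        Real.sq_sqrt hnY.le]
    have h2 : (Real.sqrt vY / Real.sqrt (vX * (1 - c))) ^ 2
        = vY / (vX * (1 - c)) := by
      rw [div_pow, Real.sq_sqrt hvY.le,
        Real.sq_sqrt (by positivity : (0:ℝ) ≤ vX * (1 - c))]
    have h3 : (nX * (1 - c))⁻¹ * nY⁻¹ * nX ^ 2 = vY / (vX * (1 - c)) := by
      have hne1 : nX * (1 - c) ≠ 0 := by positivity
      have hne2 : nY ≠ 0 := ne_of_gt hnY
      have hne3 : vX * (1 - c) ≠ 0 := by positivity
      field_simp
      nlinarith [hcount, mul_pos hnX hc, mul_pos hnY hc]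
    calc (Real.sqrt (nX * (1 - c)))⁻¹ * (Real.sqrt nY)⁻¹ * nX
        = Real.sqrt (((Real.sqrt (nX * (1 - c)))⁻¹ * (Real.sqrt nY)⁻¹ * nX) ^ 2) :=
          (Real.sqrt_sq hA).symm
      _ = Real.sqrt ((Real.sqrt vY / Real.sqrt (vX * (1 - c))) ^ 2) := by
          rw [h1, h3, ← h2]
      _ = Real.sqrt vY / Real.sqrt (vX * (1 - c)) := Real.sqrt_sq hB0
  linear_combination p * key

/-- if `X` is of type II_m and `Y` of type I (distinct orbits joined by an
edge), then `⟨ε̃_X, ε̃_Y⟩ = p_X √v_Y / √(v_X (1 - cos (π/m)))`. -/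
theorem epsTilde_inner_type_II_I
    {S W V G : Type*} [Fintype S] [Group W]
    [AddCommGroup V] [Module ℝ V] [FiniteDimensional ℝ V]
    [Group G] [MulAction G S]
    (M : CoxeterMatrix S) (cs : CoxeterSystem M W)
    (B : V →ₗ[ℝ] V →ₗ[ℝ] ℝ) (ε : S → V) (hrb : IsRootBasis M B ε)
    (hGM : ∀ (g : G) (s t : S), M (g • s) (g • t) = M s t)
    (ρ : G →* (V ≃ₗ[ℝ] V)) (hρε : ∀ (g : G) (s : S), ρ g (ε s) = ε (g • s))
    (hρB : ∀ (g : G) (x y : V), B (ρ g x) (ρ g y) = B x y)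
    (X Y : Set S) (hX : IsFinOrbit cs G X) (hY : IsFinOrbit cs G Y) (hne : X ≠ Y)
    (m : ℕ) (hXII : TypeII M X m) (hYI : TypeI M Y)
    (hedge : ∃ s ∈ X, ∃ t ∈ Y, M s t = 0 ∨ 3 ≤ M s t) :
    ∀ s ∈ X, ∀ t ∈ Y,
      B (epsTilde B ε X) (epsTilde B ε Y)
        = psum B ε Y s * Real.sqrt (vcount M X t)
            / Real.sqrt ((vcount M Y s) * (1 - Real.cos (Real.pi / (m : ℝ)))) := by
  classical
  intro s hs t ht
  obtain ⟨hBsymm, hB1, hBcos, hBinf, -⟩ := hrb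
  obtain ⟨⟨s₀, hXorb⟩, -⟩ := hX
  obtain ⟨⟨t₀, hYorb⟩, -⟩ := hY
  obtain ⟨hm3, ι, hpairs, hrest⟩ := hXII
  have hXinv : ∀ (g : G) (u : S), g • u ∈ X ↔ u ∈ X := by
    intro g u; rw [hXorb]; exact orbit_inv_aux g u
  have hYinv : ∀ (g : G) (u : S), g • u ∈ Y ↔ u ∈ Y := by
    intro g u; rw [hYorb]; exact orbit_inv_aux g u
  have hXtrans : ∀ u ∈ X, ∀ v ∈ X, ∃ g : G, g • u = v := by
    intro u hu v hv; rw [hXorb] at hu hv; exact orbit_trans_aux hu hv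
  have hYtrans : ∀ u ∈ Y, ∀ v ∈ Y, ∃ g : G, g • u = v := by
    intro u hu v hv; rw [hYorb] at hu hv; exact orbit_trans_aux hu hv
  have hXfin : X.Finite := X.toFinite
  have hYfin : Y.Finite := Y.toFinite
  have hmemX : ∀ u, u ∈ hXfin.toFinset ↔ u ∈ X := fun u => hXfin.mem_toFinset
  have hmemY : ∀ u, u ∈ hYfin.toFinset ↔ u ∈ Y := fun u => hYfin.mem_toFinset
  have haX : aVec ε X = ∑ u ∈ hXfin.toFinset, ε u := by
    rw [aVec, ← finsum_mem_coe_finset, hXfin.coe_toFinset]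
  have haY : aVec ε Y = ∑ u ∈ hYfin.toFinset, ε u := by
    rw [aVec, ← finsum_mem_coe_finset, hYfin.coe_toFinset]
  have hc1 : Real.cos (Real.pi / (m : ℝ)) < 1 := by
    have hmpos : (0:ℝ) < m := by positivity
    have h1 : (0:ℝ) < Real.pi / m := by positivity
    have h2 : Real.pi / m ≤ Real.pi := by
      have hm1 : (1:ℝ) ≤ m := by exact_mod_cast (by omega : 1 ≤ m)
      rw [div_le_iff₀ hmpos]; nlinarith [Real.pi_pos]
    calc Real.cos (Real.pi / m) < Real.cos 0 :=
          Real.cos_lt_cos_of_nonneg_of_le_pi le_rfl (by linarith) h1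
      _ = 1 := Real.cos_zero
  have h1c : (0:ℝ) < 1 - Real.cos (Real.pi / (m : ℝ)) := by linarith
  have hB2 : ∀ u w : S, u ≠ w → M u w = 2 → B (ε u) (ε w) = 0 := by
    intro u w h hn
    rw [hBcos u w h (by omega), hn]
    norm_num [Real.cos_pi_div_two]
  -- B(a_X, a_X)
  have hrowX : ∀ u ∈ hXfin.toFinset,
      ∑ w ∈ hXfin.toFinset, B (ε u) (ε w) = 1 - Real.cos (Real.pi / (m : ℝ)) := by
    intro u hu
    have huX : u ∈ X := (hmemX u).mp hu
    obtain ⟨hι1, hι2', hι3, hι4⟩ := hpairs u huX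
    have hpair : ({u, ι u} : Finset S) ⊆ hXfin.toFinset := by
      intro w hw
      simp only [Finset.mem_insert, Finset.mem_singleton] at hw
      rcases hw with rfl | rfl
      · exact hu
      · exact (hmemX _).mpr hι1
    rw [← Finset.sum_sdiff hpair]
    have hz : ∑ w ∈ hXfin.toFinset \ {u, ι u}, B (ε u) (ε w) = 0 := by
      apply Finset.sum_eq_zero
      intro w hw
      simp only [Finset.mem_sdiff, Finset.mem_insert, Finset.mem_singleton, not_or] at hw
      obtain ⟨hwFX, hw1, hw2⟩ := hw
      exact hB2 u w (Ne.symm hw1) (hrest u huX w ((hmemX w).mp hwFX) hw1 hw2)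
    have hcosm : B (ε u) (ε (ι u)) = - Real.cos (Real.pi / (m : ℝ)) := by
      rw [hBcos u (ι u) (Ne.symm hι2') (by omega), hι4]
    rw [hz, Finset.sum_pair (Ne.symm hι2'), hB1 u, hcosm]
    ring
  have hqX : B (aVec ε X) (aVec ε X)
      = (hXfin.toFinset.card : ℝ) * (1 - Real.cos (Real.pi / (m : ℝ))) := by
    rw [haX, bilin_sum_sum, Finset.sum_congr rfl hrowX, Finset.sum_const, nsmul_eq_mul]
  -- B(a_Y, a_Y)
  have hrowY : ∀ u ∈ hYfin.toFinset, ∑ w ∈ hYfin.toFinset, B (ε u) (ε w) = 1 := by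
    intro u hu
    rw [Finset.sum_eq_single_of_mem u hu (fun w hw hwu =>
      hB2 u w (Ne.symm hwu) (hYI u ((hmemY u).mp hu) w ((hmemY w).mp hw) (Ne.symm hwu)))]
    exact hB1 u
  have hqY : B (aVec ε Y) (aVec ε Y) = (hYfin.toFinset.card : ℝ) := by
    rw [haY, bilin_sum_sum, Finset.sum_congr rfl hrowY, Finset.sum_const, nsmul_eq_mul, mul_one]
  -- psum as a finset sum, and constancy on X
  have hpsumF : ∀ u : S, psum B ε Y u = ∑ w ∈ hYfin.toFinset, B (ε u) (ε w) := by
    intro u; rw [psum, ← finsum_mem_coe_finset, hYfin.coe_toFinset]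
  have hkey : ∀ (g : G) (u w : S), B (ε (g • u)) (ε (g • w)) = B (ε u) (ε w) := by
    intro g u w; rw [← hρε, ← hρε, hρB]
  have hpsum_const : ∀ u ∈ X, psum B ε Y u = psum B ε Y s := by
    intro u hu
    obtain ⟨g, hg⟩ := hXtrans s hs u hu
    rw [hpsumF, hpsumF, ← hg]
    refine (Finset.sum_equiv (MulAction.toPerm g) ?_ ?_).symm
    · intro w
      rw [hmemY w, show (MulAction.toPerm g) w = g • w from rfl, hmemY (g • w)]
      exact (hYinv g w).symm
    · intro w hw; exact (hkey g s w).symm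
  -- vcount as a filter card, and constancy
  have hvcY : ∀ u : S, vcount M Y u
      = (hYfin.toFinset.filter (fun w => M u w = 0 ∨ 3 ≤ M u w)).card := by
    intro u
    rw [vcount, ← Set.ncard_coe_finset]
    congr 1
    ext w
    simp only [Set.mem_setOf_eq, Finset.coe_filter, hmemY w]
  have hvcX : ∀ u : S, vcount M X u
      = (hXfin.toFinset.filter (fun w => M u w = 0 ∨ 3 ≤ M u w)).card := by
    intro u
    rw [vcount, ← Set.ncard_coe_finset]
    congr 1
    ext w
    simp only [Set.mem_setOf_eq, Finset.coe_filter, hmemX w]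
  have hvY_const : ∀ u ∈ X, vcount M Y u = vcount M Y s := by
    intro u hu
    obtain ⟨g, hg⟩ := hXtrans s hs u hu
    rw [hvcY, hvcY, ← hg, Finset.card_filter, Finset.card_filter]
    refine (Finset.sum_equiv (MulAction.toPerm g) ?_ ?_).symm
    · intro w
      rw [hmemY w, show (MulAction.toPerm g) w = g • w from rfl, hmemY (g • w)]
      exact (hYinv g w).symm
    · intro w hw
      simp only [show (MulAction.toPerm g) w = g • w from rfl, hGM]
  have hvX_const : ∀ u ∈ Y, vcount M X u = vcount M X t := by
    intro u hu
    obtain ⟨g, hg⟩ := hYtrans t ht u hu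
    rw [hvcX, hvcX, ← hg, Finset.card_filter, Finset.card_filter]
    refine (Finset.sum_equiv (MulAction.toPerm g) ?_ ?_).symm
    · intro w
      rw [hmemX w, show (MulAction.toPerm g) w = g • w from rfl, hmemX (g • w)]
      exact (hXinv g w).symm
    · intro w hw
      simp only [show (MulAction.toPerm g) w = g • w from rfl, hGM]
  -- double counting
  have hdc : hXfin.toFinset.card * vcount M Y s = hYfin.toFinset.card * vcount M X t := by
    have h1 : ∑ u ∈ hXfin.toFinset, vcount M Y u = hXfin.toFinset.card * vcount M Y s := by
      rw [Finset.sum_congr rfl (fun u hu => hvY_const u ((hmemX u).mp hu)),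
        Finset.sum_const, smul_eq_mul]
    have h2 : ∑ w ∈ hYfin.toFinset, vcount M X w = hYfin.toFinset.card * vcount M X t := by
      rw [Finset.sum_congr rfl (fun w hw => hvX_const w ((hmemY w).mp hw)),
        Finset.sum_const, smul_eq_mul]
    have h3 : ∑ u ∈ hXfin.toFinset, vcount M Y u = ∑ w ∈ hYfin.toFinset, vcount M X w := by
      simp only [hvcY, hvcX, Finset.card_filter]
      rw [Finset.sum_comm]
      refine Finset.sum_congr rfl fun w _ => Finset.sum_congr rfl fun u _ => ?_
      rw [M.symmetric u w]
    rw [← h1, h3, h2]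
  -- positivity
  obtain ⟨s₁, hs₁, t₁, ht₁, hP₁⟩ := hedge
  have hvXpos : 0 < vcount M Y s := by
    rw [← hvY_const s₁ hs₁, vcount]
    exact (Set.ncard_pos (hYfin.subset (fun w hw => hw.1))).mpr ⟨t₁, ht₁, hP₁⟩
  have hvYpos : 0 < vcount M X t := by
    rw [← hvX_const t₁ ht₁, vcount]
    refine (Set.ncard_pos (hXfin.subset (fun w hw => hw.1))).mpr ⟨s₁, hs₁, ?_⟩
    rw [M.symmetric t₁ s₁]; exact hP₁
  -- cross term
  have haXY : B (aVec ε X) (aVec ε Y) = (hXfin.toFinset.card : ℝ) * psum B ε Y s := by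
    rw [haX, haY, bilin_sum_sum]
    have hthis : ∀ u ∈ hXfin.toFinset,
        ∑ w ∈ hYfin.toFinset, B (ε u) (ε w) = psum B ε Y s := by
      intro u hu
      rw [← hpsumF u]
      exact hpsum_const u ((hmemX u).mp hu)
    rw [Finset.sum_congr rfl hthis, Finset.sum_const, nsmul_eq_mul]
  have hexp : B (epsTilde B ε X) (epsTilde B ε Y)
      = (Real.sqrt ((hXfin.toFinset.card : ℝ) * (1 - Real.cos (Real.pi / (m : ℝ)))))⁻¹ *
          ((Real.sqrt ((hYfin.toFinset.card : ℝ)))⁻¹ *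
            ((hXfin.toFinset.card : ℝ) * psum B ε Y s)) := by
    simp only [epsTilde, map_smul, LinearMap.smul_apply, smul_eq_mul, hqX, hqY, haXY]
    ring
  rw [hexp]
  have hnXpos : (0:ℝ) < (hXfin.toFinset.card : ℝ) := by
    exact_mod_cast Finset.card_pos.mpr ⟨s, (hmemX s).mpr hs⟩
  have hnYpos : (0:ℝ) < (hYfin.toFinset.card : ℝ) := by
    exact_mod_cast Finset.card_pos.mpr ⟨t, (hmemY t).mpr ht⟩
  have hvXRpos : (0:ℝ) < (vcount M Y s : ℝ) := by exact_mod_cast hvXpos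
  have hvYRpos : (0:ℝ) < (vcount M X t : ℝ) := by exact_mod_cast hvYpos
  have hcount : (hXfin.toFinset.card : ℝ) * (vcount M Y s : ℝ)
      = (hYfin.toFinset.card : ℝ) * (vcount M X t : ℝ) := by exact_mod_cast hdc
  exact final_arith _ _ _ _ _ _ hnXpos hnYpos hvXRpos hvYRpos h1c hcount

end CoxeterFixedPoints
end
end

section
/- Let X,Y∈𝒮 be distinct orbits with X of type II_m and Y of type II_{m'} (m, m' finite, ≥3), such that m_{s,t}≥3 for at least one pair (s,t)∈X×Y. Then ⟨ε̃_X, ε̃_Y⟩ ≤ −1. -/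
noncomputable section

open Real

namespace CoxeterFixedPoints

private lemma half_le_cos' {k : ℕ} (hk : 3 ≤ k) : (1/2 : ℝ) ≤ Real.cos (π / k) := by
  have hk3 : (3:ℝ) ≤ (k:ℝ) := by exact_mod_cast hk
  have h1 : π / (k:ℝ) ≤ π / 3 :=
    div_le_div_of_nonneg_left Real.pi_pos.le (by norm_num) hk3
  have h2 : Real.cos (π/3) ≤ Real.cos (π / k) :=
    Real.cos_le_cos_of_nonneg_of_le_pi (by positivity) (by linarith [Real.pi_pos]) h1
  rw [Real.cos_pi_div_three] at h2
  linarith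

private lemma cos_lt_one' {k : ℕ} (hk : 3 ≤ k) : Real.cos (π / k) < 1 := by
  have hk3 : (3:ℝ) ≤ (k:ℝ) := by exact_mod_cast hk
  have h1 : π / (k:ℝ) ≤ π := by
    rw [div_le_iff₀ (by linarith)]
    nlinarith [Real.pi_pos]
  have := Real.cos_lt_cos_of_nonneg_of_le_pi le_rfl h1 (by positivity)
  simpa using this

private lemma aVec_eq_sum {S V : Type*} [Fintype S] [AddCommGroup V] [Module ℝ V]
    (ε : S → V) (X : Set S) : aVec ε X = ∑ s ∈ X.toFinite.toFinset, ε s := by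
  rw [aVec, ← finsum_mem_coe_finset, Set.Finite.coe_toFinset]

private lemma B_le_of_ne {S V : Type*} [AddCommGroup V] [Module ℝ V]
    {M : CoxeterMatrix S} {B : V →ₗ[ℝ] V →ₗ[ℝ] ℝ} {ε : S → V}
    (hrb : IsRootBasis M B ε) {s t : S} (hst : s ≠ t) :
    B (ε s) (ε t) ≤ if (M s t = 0 ∨ 3 ≤ M s t) then -(1/2 : ℝ) else 0 := by
  classical
  have hne1 := M.off_diagonal s t hst
  rcases (by omega : M s t = 0 ∨ M s t = 2 ∨ 3 ≤ M s t) with h | h | h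
  · rw [if_pos (Or.inl h)]
    linarith [hrb.2.2.2.1 s t hst h]
  · rw [if_neg (by omega), hrb.2.2.1 s t hst (by omega), h]
    norm_num [Real.cos_pi_div_two]
  · rw [if_pos (Or.inr h), hrb.2.2.1 s t hst (by omega)]
    linarith [half_le_cos' h]

private lemma diag_eq {S V : Type*} [Fintype S] [AddCommGroup V] [Module ℝ V]
    {M : CoxeterMatrix S} {B : V →ₗ[ℝ] V →ₗ[ℝ] ℝ} {ε : S → V}
    (hrb : IsRootBasis M B ε) {X : Set S} {m : ℕ} (hXII : TypeII M X m) :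
    B (aVec ε X) (aVec ε X)
      = (X.toFinite.toFinset.card : ℝ) * (1 - Real.cos (π / m)) := by
  classical
  obtain ⟨hm3, ι, hι1, hι2⟩ := hXII
  set xf := X.toFinite.toFinset with hxf
  have hmemf : ∀ s : S, s ∈ xf ↔ s ∈ X := fun s => Set.Finite.mem_toFinset _
  rw [aVec_eq_sum]
  have expand : B (∑ s ∈ xf, ε s) (∑ s ∈ xf, ε s)
      = ∑ s ∈ xf, ∑ t ∈ xf, B (ε s) (ε t) := by
    simp only [map_sum, LinearMap.coe_sum, Finset.sum_apply]
    exact Finset.sum_comm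
  rw [expand]
  have key : ∀ s ∈ xf, ∑ t ∈ xf, B (ε s) (ε t) = 1 - Real.cos (π / m) := by
    intro s hs
    have hsX : s ∈ X := (hmemf s).mp hs
    obtain ⟨hιX, hιne, hιι, hιm⟩ := hι1 s hsX
    have hterm : ∀ t ∈ xf, B (ε s) (ε t) =
        (if t = s then (1:ℝ) else 0) + (if t = ι s then -Real.cos (π / m) else 0) := by
      intro t ht
      have htX : t ∈ X := (hmemf t).mp ht
      by_cases h1 : t = s
      · subst h1
        rw [if_pos rfl, if_neg (fun h => hιne h.symm), hrb.2.1 t]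
        ring
      · by_cases h2 : t = ι s
        · subst h2
          rw [if_neg h1, if_pos rfl, hrb.2.2.1 s (ι s) (fun h => h1 h.symm)
            (by omega : M s (ι s) ≠ 0), hιm]
          ring
        · rw [if_neg h1, if_neg h2,
            hrb.2.2.1 s t (fun h => h1 h.symm) (by rw [hι2 s hsX t htX h1 h2]; omega),
            hι2 s hsX t htX h1 h2]
          norm_num [Real.cos_pi_div_two]
    rw [Finset.sum_congr rfl hterm, Finset.sum_add_distrib,
      Finset.sum_ite_eq' xf s (fun _ => (1:ℝ)),
      Finset.sum_ite_eq' xf (ι s) (fun _ => -Real.cos (π / m)),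
      if_pos hs, if_pos ((hmemf (ι s)).mpr hιX)]
    ring
  rw [Finset.sum_congr rfl key, Finset.sum_const, nsmul_eq_mul]

set_option maxHeartbeats 1600000

/-- if `X` is of type II_m and `Y` of type II_{m'} (distinct orbits joined
by an edge), then `⟨ε̃_X, ε̃_Y⟩ ≤ -1`. -/
theorem epsTilde_inner_type_II_II
    {S W V G : Type*} [Fintype S] [Group W]
    [AddCommGroup V] [Module ℝ V] [FiniteDimensional ℝ V]
    [Group G] [MulAction G S]
    (M : CoxeterMatrix S) (cs : CoxeterSystem M W)
    (B : V →ₗ[ℝ] V →ₗ[ℝ] ℝ) (ε : S → V) (hrb : IsRootBasis M B ε)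
    (hGM : ∀ (g : G) (s t : S), M (g • s) (g • t) = M s t)
    (ρ : G →* (V ≃ₗ[ℝ] V)) (hρε : ∀ (g : G) (s : S), ρ g (ε s) = ε (g • s))
    (hρB : ∀ (g : G) (x y : V), B (ρ g x) (ρ g y) = B x y)
    (X Y : Set S) (hX : IsFinOrbit cs G X) (hY : IsFinOrbit cs G Y) (hne : X ≠ Y)
    (m m' : ℕ) (hXII : TypeII M X m) (hYII : TypeII M Y m')
    (hedge : ∃ s ∈ X, ∃ t ∈ Y, M s t = 0 ∨ 3 ≤ M s t) :
    B (epsTilde B ε X) (epsTilde B ε Y) ≤ -1 := by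
  classical
  obtain ⟨s₁, hs₁X, t₁, ht₁Y, hedge₁⟩ := hedge
  obtain ⟨⟨s₀, hXorb⟩, -⟩ := hX
  obtain ⟨⟨t₀, hYorb⟩, -⟩ := hY
  -- disjointness of the two orbits
  have hdisj : ∀ a, a ∈ X → a ∉ Y := by
    intro a haX haY
    apply hne
    rw [hXorb, hYorb]
    rw [hXorb] at haX; rw [hYorb] at haY
    rw [← MulAction.orbit_eq_iff.mpr haX, ← MulAction.orbit_eq_iff.mpr haY]
  -- invariance of the orbits
  have hinv : ∀ (Z : Set S) (z₀ : S), Z = MulAction.orbit G z₀ →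
      ∀ (g : G), ∀ t ∈ Z, g • t ∈ Z := by
    intro Z z₀ hZ g t ht
    rw [hZ] at ht ⊢
    obtain ⟨h, hh⟩ := MulAction.mem_orbit_iff.mp ht
    exact MulAction.mem_orbit_iff.mpr ⟨g * h, by rw [mul_smul, hh]⟩
  have hXinv := hinv X s₀ hXorb
  have hYinv := hinv Y t₀ hYorb
  set xf := X.toFinite.toFinset with hxf
  set yf := Y.toFinite.toFinset with hyf
  have hmemx : ∀ s : S, s ∈ xf ↔ s ∈ X := fun s => Set.Finite.mem_toFinset _
  have hmemy : ∀ s : S, s ∈ yf ↔ s ∈ Y := fun s => Set.Finite.mem_toFinset _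
  -- the edge-counting functions
  set P : S → S → Prop := fun s t => M s t = 0 ∨ 3 ≤ M s t with hP
  set w : S → ℕ := fun s => (yf.filter (fun t => P s t)).card with hw
  set w' : S → ℕ := fun t => (xf.filter (fun s => P t s)).card with hw'
  -- w is constant on X
  have hwg : ∀ (g : G) (s : S), w (g • s) = w s := by
    intro g s
    have himg : yf.filter (fun t => P (g • s) t)
        = (yf.filter (fun t => P s t)).image (g • ·) := by
      ext t
      simp only [Finset.mem_filter, Finset.mem_image]
      constructor
      · rintro ⟨hty, hp⟩
        refine ⟨g⁻¹ • t, ⟨?_, ?_⟩, smul_inv_smul g t⟩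
        · exact (hmemy _).mpr (hYinv g⁻¹ t ((hmemy t).mp hty))
        · have h5 : M (g • s) (g • (g⁻¹ • t)) = M s (g⁻¹ • t) := hGM g s (g⁻¹ • t)
          rw [smul_inv_smul] at h5
          show M s (g⁻¹ • t) = 0 ∨ 3 ≤ M s (g⁻¹ • t)
          rw [← h5]; exact hp
      · rintro ⟨u, ⟨huy, hpu⟩, rfl⟩
        refine ⟨(hmemy _).mpr (hYinv g u ((hmemy u).mp huy)), ?_⟩
        show M (g • s) (g • u) = 0 ∨ 3 ≤ M (g • s) (g • u)
        rw [hGM g s u]; exact hpu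
    rw [hw]
    simp only [himg]
    exact Finset.card_image_of_injective _ (MulAction.injective g)
  have hwconst : ∀ s ∈ X, w s = w s₁ := by
    intro s hs
    rw [hXorb] at hs hs₁X
    obtain ⟨g, rfl⟩ := hs
    obtain ⟨g₁, rfl⟩ := hs₁X
    rw [hwg g s₀, hwg g₁ s₀]
  -- w' is constant on Y
  have hw'g : ∀ (g : G) (t : S), w' (g • t) = w' t := by
    intro g t
    have himg : xf.filter (fun s => P (g • t) s)
        = (xf.filter (fun s => P t s)).image (g • ·) := by
      ext s
      simp only [Finset.mem_filter, Finset.mem_image]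
      constructor
      · rintro ⟨hsx, hp⟩
        refine ⟨g⁻¹ • s, ⟨?_, ?_⟩, smul_inv_smul g s⟩
        · exact (hmemx _).mpr (hXinv g⁻¹ s ((hmemx s).mp hsx))
        · have h5 : M (g • t) (g • (g⁻¹ • s)) = M t (g⁻¹ • s) := hGM g t (g⁻¹ • s)
          rw [smul_inv_smul] at h5
          show M t (g⁻¹ • s) = 0 ∨ 3 ≤ M t (g⁻¹ • s)
          rw [← h5]; exact hp
      · rintro ⟨u, ⟨hux, hpu⟩, rfl⟩
        refine ⟨(hmemx _).mpr (hXinv g u ((hmemx u).mp hux)), ?_⟩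
        show M (g • t) (g • u) = 0 ∨ 3 ≤ M (g • t) (g • u)
        rw [hGM g t u]; exact hpu
    rw [hw']
    simp only [himg]
    exact Finset.card_image_of_injective _ (MulAction.injective g)
  have hw'const : ∀ t ∈ Y, w' t = w' t₁ := by
    intro t ht
    rw [hYorb] at ht ht₁Y
    obtain ⟨g, rfl⟩ := ht
    obtain ⟨g₁, rfl⟩ := ht₁Y
    rw [hw'g g t₀, hw'g g₁ t₀]
  -- both values are at least 1
  have hws₁ : 1 ≤ w s₁ := by
    rw [hw]
    refine Finset.card_pos.mpr ⟨t₁, Finset.mem_filter.mpr ⟨(hmemy t₁).mpr ht₁Y, hedge₁⟩⟩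
  have hw't₁ : 1 ≤ w' t₁ := by
    rw [hw']
    refine Finset.card_pos.mpr ⟨s₁, Finset.mem_filter.mpr ⟨(hmemx s₁).mpr hs₁X, ?_⟩⟩
    show M t₁ s₁ = 0 ∨ 3 ≤ M t₁ s₁
    rw [M.symmetric t₁ s₁]
    exact hedge₁
  -- the total number of edges, counted from both sides
  set E : ℕ := ∑ s ∈ xf, w s with hE
  have hEx : E = xf.card * w s₁ := by
    rw [hE, Finset.sum_congr rfl (fun s hs => hwconst s ((hmemx s).mp hs)),
      Finset.sum_const, smul_eq_mul]
  have hEy : E = yf.card * w' t₁ := by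
    have hswap : E = ∑ t ∈ yf, w' t := by
      rw [hE]
      simp only [hw, hw', Finset.card_filter]
      rw [Finset.sum_comm]
      refine Finset.sum_congr rfl fun t _ => Finset.sum_congr rfl fun s _ => ?_
      have hsym : M s t = M t s := M.symmetric s t
      simp only [hP, hsym]
    rw [hswap, Finset.sum_congr rfl (fun t ht => hw'const t ((hmemy t).mp ht)),
      Finset.sum_const, smul_eq_mul]
  have hExle : xf.card ≤ E := by
    calc xf.card = xf.card * 1 := (mul_one _).symm
      _ ≤ xf.card * w s₁ := Nat.mul_le_mul_left _ hws₁
      _ = E := hEx.symm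
  have hEyle : yf.card ≤ E := by
    calc yf.card = yf.card * 1 := (mul_one _).symm
      _ ≤ yf.card * w' t₁ := Nat.mul_le_mul_left _ hw't₁
      _ = E := hEy.symm
  -- bound on the cross term
  have hcross : B (aVec ε X) (aVec ε Y) ≤ -(1/2 : ℝ) * (E : ℝ) := by
    rw [aVec_eq_sum, aVec_eq_sum]
    have expand : B (∑ s ∈ xf, ε s) (∑ t ∈ yf, ε t)
        = ∑ s ∈ xf, ∑ t ∈ yf, B (ε s) (ε t) := by
      simp only [map_sum, LinearMap.coe_sum, Finset.sum_apply]
      exact Finset.sum_comm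
    rw [expand]
    have step1 : ∑ s ∈ xf, ∑ t ∈ yf, B (ε s) (ε t)
        ≤ ∑ s ∈ xf, ∑ t ∈ yf, (if P s t then -(1/2 : ℝ) else 0) := by
      refine Finset.sum_le_sum fun s hs => Finset.sum_le_sum fun t ht => ?_
      have hst : s ≠ t := by
        intro h
        exact hdisj s ((hmemx s).mp hs) (h ▸ (hmemy t).mp ht)
      exact B_le_of_ne hrb hst
    refine step1.trans (le_of_eq ?_)
    have hws : ∀ s : S, (∑ t ∈ yf, (if P s t then -(1/2 : ℝ) else 0))
        = -(1/2 : ℝ) * (w s : ℝ) := by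
      intro s
      have hcast : (w s : ℝ) = ∑ t ∈ yf, (if P s t then (1:ℝ) else 0) := by
        show (((yf.filter (fun t => P s t)).card : ℕ) : ℝ) = _
        rw [Finset.card_filter]
        push_cast
        rfl
      rw [hcast, Finset.mul_sum]
      refine Finset.sum_congr rfl fun t _ => ?_
      by_cases h : P s t <;> simp [h]
    rw [Finset.sum_congr rfl (fun s _ => hws s), ← Finset.mul_sum, hE]
    push_cast
    ring
  -- bounds on the diagonal terms
  have hm3 := hXII.1
  have hm'3 := hYII.1
  set A := B (aVec ε X) (aVec ε X) with hA
  set A' := B (aVec ε Y) (aVec ε Y) with hA'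
  have hAeq : A = (xf.card : ℝ) * (1 - Real.cos (π / m)) := diag_eq hrb hXII
  have hA'eq : A' = (yf.card : ℝ) * (1 - Real.cos (π / m')) := diag_eq hrb hYII
  have hxcard : 1 ≤ xf.card := Finset.card_pos.mpr ⟨s₁, (hmemx s₁).mpr hs₁X⟩
  have hycard : 1 ≤ yf.card := Finset.card_pos.mpr ⟨t₁, (hmemy t₁).mpr ht₁Y⟩
  have hxcardR : (1:ℝ) ≤ (xf.card : ℝ) := by exact_mod_cast hxcard
  have hycardR : (1:ℝ) ≤ (yf.card : ℝ) := by exact_mod_cast hycard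
  have hApos : 0 < A := by
    rw [hAeq]
    have := cos_lt_one' hm3
    nlinarith
  have hA'pos : 0 < A' := by
    rw [hA'eq]
    have := cos_lt_one' hm'3
    nlinarith
  have hAle : A ≤ (xf.card : ℝ) / 2 := by
    rw [hAeq]
    have := half_le_cos' hm3
    nlinarith
  have hA'le : A' ≤ (yf.card : ℝ) / 2 := by
    rw [hA'eq]
    have := half_le_cos' hm'3
    nlinarith
  -- √A √A' ≤ E/2
  have hER : ((xf.card : ℝ) ≤ (E:ℝ)) := by exact_mod_cast hExle
  have hER' : ((yf.card : ℝ) ≤ (E:ℝ)) := by exact_mod_cast hEyle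
  have hsqrt : Real.sqrt A * Real.sqrt A' ≤ (E : ℝ) / 2 := by
    rw [← Real.sqrt_mul hApos.le]
    have h2 : A * A' ≤ ((E:ℝ)/2)^2 := by
      have h3 : A * A' ≤ ((xf.card:ℝ)/2) * ((yf.card:ℝ)/2) :=
        mul_le_mul hAle hA'le hA'pos.le (div_nonneg (Nat.cast_nonneg _) (by norm_num))
      have h4 : ((xf.card:ℝ)) * ((yf.card:ℝ)) ≤ (E:ℝ) * (E:ℝ) :=
        mul_le_mul hER hER' (Nat.cast_nonneg _) (le_trans (Nat.cast_nonneg _) hER)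
      nlinarith
    calc Real.sqrt (A * A') ≤ Real.sqrt (((E:ℝ)/2)^2) := Real.sqrt_le_sqrt h2
      _ = (E:ℝ)/2 := Real.sqrt_sq (div_nonneg (Nat.cast_nonneg _) (by norm_num))
  -- conclude
  have hAs : 0 < Real.sqrt A := Real.sqrt_pos.mpr hApos
  have hA's : 0 < Real.sqrt A' := Real.sqrt_pos.mpr hA'pos
  rw [epsTilde, epsTilde, ← hA, ← hA']
  simp only [map_smul, LinearMap.smul_apply, smul_eq_mul]
  have hprod : 0 < Real.sqrt A * Real.sqrt A' := mul_pos hAs hA's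
  have hrw : (Real.sqrt A)⁻¹ * ((Real.sqrt A')⁻¹ * B (aVec ε X) (aVec ε Y))
      = B (aVec ε X) (aVec ε Y) / (Real.sqrt A * Real.sqrt A') := by
    field_simp
  show (Real.sqrt A')⁻¹ * ((Real.sqrt A)⁻¹ * B (aVec ε X) (aVec ε Y)) ≤ -1
  have hrw2 : (Real.sqrt A')⁻¹ * ((Real.sqrt A)⁻¹ * B (aVec ε X) (aVec ε Y))
      = (Real.sqrt A)⁻¹ * ((Real.sqrt A')⁻¹ * B (aVec ε X) (aVec ε Y)) := by ring
  rw [hrw2, hrw, div_le_iff₀ hprod]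
  linarith

end CoxeterFixedPoints
end
end
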